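/- Let $0 < \alpha < 2 < \beta$ and $A, B, C > 0$. Consider $f(s) = s^2 A - s^{\alpha} C - s^{\beta} B$ on $(0,\infty)$. Set $\mu_* = \max_{s>0}\left(s^{2-\alpha}A - s^{\beta-\alpha}B\right)$. Then: (i) if $C < \mu_*$, the equation $f(s)=0$ has exactly two positive solutions $t^+ < s_* < t^-$, where $s_* = \left(\frac{(2-\alpha)A}{(\beta-\alpha)B}\right)^{1/(\beta-2)}$; (ii) if $C = \mu_*$, then $f(s)=0$ has exactly one positive solution $s = s_*$; (iii) if $C > \mu_*$, then $f(s)=0$ has no positive solution. -/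

import Mathlib

/-!
For `s > 0`, `f s = s ^ α * (g s - C)` with `g s = s ^ (2 - α) * A - s ^ (β - α) * B`, so the
positive roots of `f` are the solutions of `g s = C`. The derivative
`g' s = s ^ (1 - α) * ((2 - α) * A - (β - α) * B * s ^ (β - 2))` changes sign only at `s_*`, so `g`
increases strictly from `g 0 = 0` to its maximum `μ_* = g s_*` and then decreases strictly, through
`0` at `(A / B) ^ (1 / (β - 2)) > s_*`. By the intermediate value theorem each level
`0 < C < μ_*` is attained exactly once on each side of `s_*`; the level `μ_*` only at `s_*`.
-/

open Real Set

noncomputable def powDiff (a b A B s : ℝ) : ℝ := s ^ a * A - s ^ b * B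

noncomputable def powDiffPeak (a b A B : ℝ) : ℝ := (a * A / (b * B)) ^ (1 / (b - a))

section PowDiff

variable {a b A B : ℝ}

theorem continuous_powDiff (ha : 0 ≤ a) (hb : 0 ≤ b) : Continuous (powDiff a b A B) :=
  continuous_iff_continuousAt.2 fun x =>
    ((continuousAt_rpow_const x a (Or.inr ha)).mul continuousAt_const).sub
      ((continuousAt_rpow_const x b (Or.inr hb)).mul continuousAt_const)

theorem powDiff_zero (ha : a ≠ 0) (hb : b ≠ 0) : powDiff a b A B 0 = 0 := by
  simp [powDiff, zero_rpow ha, zero_rpow hb]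

theorem powDiff_eq_mul {s : ℝ} (hs : 0 < s) :
    powDiff a b A B s = s ^ a * (A - B * s ^ (b - a)) := by
  rw [powDiff, mul_sub, ← mul_assoc, mul_comm (s ^ a) B, mul_assoc, ← rpow_add hs,
    add_sub_cancel]
  ring

theorem hasDerivAt_powDiff {s : ℝ} (hs : 0 < s) :
    HasDerivAt (powDiff a b A B) (s ^ (a - 1) * (a * A - b * B * s ^ (b - a))) s := by
  have h := ((hasDerivAt_rpow_const (p := a) (Or.inl hs.ne')).mul_const A).sub
    ((hasDerivAt_rpow_const (p := b) (Or.inl hs.ne')).mul_const B)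
  refine h.congr_deriv ?_
  rw [show b - 1 = (a - 1) + (b - a) by ring, rpow_add hs]
  ring

theorem powDiff_root (hab : a < b) (hA : 0 < A) (hB : 0 < B) :
    powDiff a b A B ((A / B) ^ (1 / (b - a))) = 0 := by
  rw [powDiff_eq_mul (by positivity), one_div, rpow_inv_rpow (by positivity) (sub_pos.2 hab).ne',
    mul_div_cancel₀ _ hB.ne', sub_self, mul_zero]

variable (ha : 0 < a) (hab : a < b) (hA : 0 < A) (hB : 0 < B)
include ha hab hA hB

theorem powDiffPeak_pos : 0 < powDiffPeak a b A B :=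
  rpow_pos_of_pos (by have := ha.trans hab; positivity) _

theorem powDiffPeak_rpow : powDiffPeak a b A B ^ (b - a) = a * A / (b * B) := by
  have : 0 ≤ a * A / (b * B) := by have := ha.trans hab; positivity
  rw [powDiffPeak, one_div, rpow_inv_rpow this (sub_pos.2 hab).ne']

theorem deriv_powDiff_eq {s : ℝ} (hs : 0 < s) :
    deriv (powDiff a b A B) s =
      s ^ (a - 1) * (b * B) * (powDiffPeak a b A B ^ (b - a) - s ^ (b - a)) := by
  have : b * B ≠ 0 := by have := ha.trans hab; positivity
  rw [(hasDerivAt_powDiff hs).deriv, powDiffPeak_rpow ha hab hA hB, mul_assoc (s ^ (a - 1)),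
    mul_sub (b * B), mul_div_cancel₀ _ this]

theorem strictMonoOn_powDiff : StrictMonoOn (powDiff a b A B) (Icc 0 (powDiffPeak a b A B)) := by
  refine strictMonoOn_of_deriv_pos (convex_Icc _ _)
    (continuous_powDiff ha.le (ha.trans hab).le).continuousOn fun x hx => ?_
  rw [interior_Icc] at hx
  rw [deriv_powDiff_eq ha hab hA hB hx.1]
  have := ha.trans hab
  have := rpow_lt_rpow hx.1.le hx.2 (sub_pos.2 hab)
  have := rpow_pos_of_pos hx.1 (a - 1)
  have : 0 < powDiffPeak a b A B ^ (b - a) - x ^ (b - a) := by linarith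
  positivity

theorem strictAntiOn_powDiff : StrictAntiOn (powDiff a b A B) (Ici (powDiffPeak a b A B)) := by
  refine strictAntiOn_of_deriv_neg (convex_Ici _)
    (continuous_powDiff ha.le (ha.trans hab).le).continuousOn fun x hx => ?_
  rw [interior_Ici] at hx
  have hx0 : 0 < x := (powDiffPeak_pos ha hab hA hB).trans hx
  rw [deriv_powDiff_eq ha hab hA hB hx0]
  refine mul_neg_of_pos_of_neg (by have := ha.trans hab; positivity) (sub_neg.2 ?_)
  exact rpow_lt_rpow (powDiffPeak_pos ha hab hA hB).le hx (sub_pos.2 hab)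

theorem powDiff_lt_powDiffPeak {s : ℝ} (hs : 0 < s) (hne : s ≠ powDiffPeak a b A B) :
    powDiff a b A B s < powDiff a b A B (powDiffPeak a b A B) := by
  have hpeak := powDiffPeak_pos ha hab hA hB
  rcases hne.lt_or_gt with h | h
  · exact strictMonoOn_powDiff ha hab hA hB ⟨hs.le, h.le⟩ ⟨hpeak.le, le_rfl⟩ h
  · exact strictAntiOn_powDiff ha hab hA hB self_mem_Ici h.le h

theorem isGreatest_powDiff :
    IsGreatest (powDiff a b A B '' Ioi 0) (powDiff a b A B (powDiffPeak a b A B)) := by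
  refine ⟨⟨_, powDiffPeak_pos ha hab hA hB, rfl⟩, ?_⟩
  rintro _ ⟨s, hs, rfl⟩
  rcases eq_or_ne s (powDiffPeak a b A B) with rfl | hne
  · exact le_rfl
  · exact (powDiff_lt_powDiffPeak ha hab hA hB hs hne).le

theorem powDiffPeak_lt_root : powDiffPeak a b A B < (A / B) ^ (1 / (b - a)) := by
  have hb := ha.trans hab
  rw [← rpow_lt_rpow_iff (powDiffPeak_pos ha hab hA hB).le (by positivity) (sub_pos.2 hab),
    powDiffPeak_rpow ha hab hA hB, one_div, rpow_inv_rpow (by positivity) (sub_pos.2 hab).ne',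
    mul_div_mul_comm]
  exact mul_lt_of_lt_one_left (by positivity) ((div_lt_one hb).2 hab)

theorem exists_powDiff_eq_iff_eq_or_eq {C : ℝ} (hC : 0 < C)
    (hCμ : C < powDiff a b A B (powDiffPeak a b A B)) :
    ∃ tp tm : ℝ, 0 < tp ∧ tp < powDiffPeak a b A B ∧ powDiffPeak a b A B < tm ∧
      ∀ s, 0 < s → (powDiff a b A B s = C ↔ s = tp ∨ s = tm) := by
  have hcont : Continuous (powDiff a b A B) := continuous_powDiff ha.le (ha.trans hab).le
  have hpeak := powDiffPeak_pos ha hab hA hB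
  obtain ⟨tp, ⟨htp0, htp⟩, hgtp⟩ := intermediate_value_Ioo hpeak.le hcont.continuousOn
    ⟨(powDiff_zero ha.ne' (ha.trans hab).ne').symm ▸ hC, hCμ⟩
  obtain ⟨tm, ⟨htm, -⟩, hgtm⟩ := intermediate_value_Ioo' (powDiffPeak_lt_root ha hab hA hB).le
    hcont.continuousOn ⟨(powDiff_root hab hA hB).symm ▸ hC, hCμ⟩
  refine ⟨tp, tm, htp0, htp, htm, fun s hs => ⟨fun hgs => ?_, ?_⟩⟩
  · rcases lt_trichotomy s (powDiffPeak a b A B) with h | rfl | h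
    · exact .inl <| (strictMonoOn_powDiff ha hab hA hB).injOn ⟨hs.le, h.le⟩
        ⟨htp0.le, htp.le⟩ (hgs.trans hgtp.symm)
    · exact absurd hgs hCμ.ne'
    · exact .inr <| (strictAntiOn_powDiff ha hab hA hB).injOn h.le htm.le (hgs.trans hgtm.symm)
  · rintro (rfl | rfl) <;> assumption

end PowDiff

theorem fibering_eq_zero_iff {α β A B C s : ℝ} (hs : 0 < s) :
    s ^ (2 : ℝ) * A - s ^ α * C - s ^ β * B = 0 ↔ powDiff (2 - α) (β - α) A B s = C := by
  have hsplit : s ^ (2 : ℝ) * A - s ^ α * C - s ^ β * B =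
      s ^ α * (powDiff (2 - α) (β - α) A B s - C) := by
    rw [powDiff, mul_sub, mul_sub, ← mul_assoc, ← mul_assoc, ← rpow_add hs, ← rpow_add hs,
      add_sub_cancel, add_sub_cancel]
    ring
  rw [hsplit, mul_eq_zero, sub_eq_zero, or_iff_right (rpow_pos_of_pos hs α).ne']

theorem stmt1_general (α β A B C : ℝ) (hα2 : α < 2) (hβ : 2 < β)
    (hA : 0 < A) (hB : 0 < B) (hC : 0 < C) :
    let f : ℝ → ℝ := fun s => s ^ (2 : ℝ) * A - s ^ α * C - s ^ β * B
    let μstar : ℝ := sSup ((fun s : ℝ => s ^ (2 - α) * A - s ^ (β - α) * B) '' Ioi 0)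
    let sstar : ℝ := ((2 - α) * A / ((β - α) * B)) ^ (1 / (β - 2))
    (C < μstar → ∃ tp tm : ℝ, 0 < tp ∧ tp < sstar ∧ sstar < tm ∧ f tp = 0 ∧ f tm = 0 ∧
        ∀ s, 0 < s → f s = 0 → s = tp ∨ s = tm) ∧
    (C = μstar → ∀ s, 0 < s → (f s = 0 ↔ s = sstar)) ∧
    (C > μstar → ∀ s, 0 < s → f s ≠ 0) := by
  intro f μstar sstar
  have ha : 0 < 2 - α := by linarith
  have hab : 2 - α < β - α := by linarith
  have hsstar : sstar = powDiffPeak (2 - α) (β - α) A B := by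
    rw [powDiffPeak, sub_sub_sub_cancel_right]
  have hμ : μstar = powDiff (2 - α) (β - α) A B sstar :=
    hsstar ▸ (isGreatest_powDiff ha hab hA hB).csSup_eq
  have hf : ∀ s, 0 < s → (f s = 0 ↔ powDiff (2 - α) (β - α) A B s = C) :=
    fun s hs => fibering_eq_zero_iff hs
  clear_value f μstar sstar
  subst hsstar hμ
  refine ⟨fun hCμ => ?_, fun hCμ s hs => ?_, fun hCμ s hs => ?_⟩
  · obtain ⟨tp, tm, htp0, htp, htm, hroots⟩ := exists_powDiff_eq_iff_eq_or_eq ha hab hA hB hC hCμ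
    have htm0 := htp0.trans (htp.trans htm)
    exact ⟨tp, tm, htp0, htp, htm, (hf tp htp0).2 ((hroots tp htp0).2 (.inl rfl)),
      (hf tm htm0).2 ((hroots tm htm0).2 (.inr rfl)),
      fun s hs hfs => (hroots s hs).1 ((hf s hs).1 hfs)⟩
  · rw [hf s hs, hCμ]
    refine ⟨fun h => ?_, fun h => h ▸ rfl⟩
    by_contra hne
    exact (powDiff_lt_powDiffPeak ha hab hA hB hs hne).ne h
  · rw [Ne, hf s hs]
    rintro rfl
    exact ((isGreatest_powDiff ha hab hA hB).2 ⟨s, hs, rfl⟩).not_gt hCμ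

theorem stmt1 (α β A B C : ℝ) (hα : 0 < α) (hα2 : α < 2) (hβ : 2 < β)
    (hA : 0 < A) (hB : 0 < B) (hC : 0 < C) :
    let f : ℝ → ℝ := fun s => s ^ (2 : ℝ) * A - s ^ α * C - s ^ β * B
    let μstar : ℝ := sSup ((fun s : ℝ => s ^ (2 - α) * A - s ^ (β - α) * B) '' Ioi 0)
    let sstar : ℝ := ((2 - α) * A / ((β - α) * B)) ^ (1 / (β - 2))
    (C < μstar → ∃ tp tm : ℝ, 0 < tp ∧ tp < sstar ∧ sstar < tm ∧ f tp = 0 ∧ f tm = 0 ∧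
        ∀ s, 0 < s → f s = 0 → s = tp ∨ s = tm) ∧
    (C = μstar → ∀ s, 0 < s → (f s = 0 ↔ s = sstar)) ∧
    (C > μstar → ∀ s, 0 < s → f s ≠ 0) :=
  stmt1_general α β A B C hα2 hβ hA hB hC
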